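/- arXiv:2303.08111 — 2 statements merged into one kernel-verified Lean document; each statement's English description precedes it below -/
import Mathlib

section
/- If Q is a subdivision of a partition P of [n+1], then e_P((ℝ^d)^p) ⊆ e_Q((ℝ^d)^q); consequently, for every y ∈ (ℝ^d)^n one has |y − e_Q(π_Q(y))| ≤ |y − e_P(π_P(y))|, and ν_P ⊆ ν_Q. -/
open scoped BigOperators
open Finset

noncomputable section

namespace SinhaKnots

attribute [local instance] Classical.propDecidable

/-- `ℝ^d` with the Euclidean norm. -/
abbrev Rd (d : ℕ) := EuclideanSpace ℝ (Fin d)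

/-- `(ℝ^d)^m` with the Euclidean norm. -/
abbrev Vec (m d : ℕ) := PiLp 2 (fun _ : Fin m => Rd d)

/-- The first standard basis vector `u = (1,0,…,0)` of `ℝ^d`. -/
def uVec (d : ℕ) : Rd d := if h : 0 < d then EuclideanSpace.single ⟨0, h⟩ 1 else 0

/-- The second standard basis vector `v = (0,1,0,…,0)` of `ℝ^d`. -/
def vVec (d : ℕ) : Rd d := if h : 1 < d then EuclideanSpace.single ⟨1, h⟩ 1 else 0

/-- The first coordinate of a vector of `ℝ^d`. -/
def fst {d : ℕ} (x : Rd d) : ℝ := if h : 0 < d then x ⟨0, h⟩ else 0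

/-- A partition of `[n+1] = {0,1,…,n+1}` into (at least two) nonempty consecutive intervals,
encoded as a monotone surjection onto `Fin (p+2)`; the pieces are the fibers, totally
ordered via the index, and `p` is the number of non-extremal pieces. -/
structure IntervalPartition (n : ℕ) where
  p : ℕ
  toFun : Fin (n + 2) → Fin (p + 2)
  mono : Monotone toFun
  surj : Function.Surjective toFun

/-- `Q` is a subdivision of `P`: every piece of `Q` is contained in a piece of `P`,
and `Q ≠ P` (equivalently, `Q` has strictly more pieces). -/
def Subdivides {n : ℕ} (Q P : IntervalPartition n) : Prop :=
  (∀ i j, Q.toFun i = Q.toFun j → P.toFun i = P.toFun j) ∧ P.p < Q.p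

/-- The element `i+1` of `[n+1]`, corresponding to the `i`-th component of `(ℝ^d)^n`. -/
def elt (n : ℕ) (i : Fin n) : Fin (n + 2) := ⟨(i : ℕ) + 1, by omega⟩

/-- The finest partition of `[n+1]`, into singletons. -/
def finest (n : ℕ) : IntervalPartition n :=
  ⟨n, id, monotone_id, Function.surjective_id⟩

variable {n : ℕ}

/-- The piece of `P` with index `a`, as a finite set of elements of `[n+1]`. -/
def fiber (P : IntervalPartition n) (a : Fin (P.p + 2)) : Finset (Fin (n + 2)) :=
  Finset.univ.filter fun i => P.toFun i = a

lemma fiber_nonempty (P : IntervalPartition n) (a : Fin (P.p + 2)) : (fiber P a).Nonempty := by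
  obtain ⟨i, hi⟩ := P.surj a
  exact ⟨i, by simp [fiber, hi]⟩

/-- The minimal element of a piece. -/
def minElt (P : IntervalPartition n) (a : Fin (P.p + 2)) : Fin (n + 2) :=
  (fiber P a).min' (fiber_nonempty P a)

/-- The maximal element of a piece. -/
def maxElt (P : IntervalPartition n) (a : Fin (P.p + 2)) : Fin (n + 2) :=
  (fiber P a).max' (fiber_nonempty P a)

/-- `c_α = ∑_{i ∈ α} c_i`. -/
def cPiece (c : Fin (n + 2) → ℝ) (P : IntervalPartition n) (a : Fin (P.p + 2)) : ℝ :=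
  ∑ i ∈ fiber P a, c i

/-- `c_{≤α} = ∑_{γ < α} c_γ + c_α/2`. -/
def cLE (c : Fin (n + 2) → ℝ) (P : IntervalPartition n) (a : Fin (P.p + 2)) : ℝ :=
  (∑ i ∈ Finset.univ.filter fun i => P.toFun i < a, c i) + cPiece c P a / 2

/-- `c_{≥α} = ∑_{γ > α} c_γ + c_α/2`. -/
def cGE (c : Fin (n + 2) → ℝ) (P : IntervalPartition n) (a : Fin (P.p + 2)) : ℝ :=
  (∑ i ∈ Finset.univ.filter fun i => a < P.toFun i, c i) + cPiece c P a / 2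

/-- `c_{αβ} = ∑_{α < γ < β} c_γ + (c_α + c_β)/2`. -/
def cBetween (c : Fin (n + 2) → ℝ) (P : IntervalPartition n) (a b : Fin (P.p + 2)) : ℝ :=
  (∑ i ∈ Finset.univ.filter fun i => a < P.toFun i ∧ P.toFun i < b, c i)
    + (cPiece c P a + cPiece c P b) / 2

/-- The tuple `x` indexed by the non-extremal pieces, extended to all pieces by the fixed
values `x₀ = (-1+ρc_{α₀}/2)u` and `x_{p+1} = (1-ρc_{α_{p+1}}/2)u` on the extremal pieces. -/
def extTuple (ρ : ℝ) (c : Fin (n + 2) → ℝ) (P : IntervalPartition n) {d : ℕ}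
    (x : Vec P.p d) : Fin (P.p + 2) → Rd d := fun a =>
  if _h0 : (a : ℕ) = 0 then (-1 + ρ * cPiece c P 0 / 2) • uVec d
  else if _h1 : (a : ℕ) = P.p + 1 then
    (1 - ρ * cPiece c P (Fin.last (P.p + 1)) / 2) • uVec d
  else x ⟨(a : ℕ) - 1, by have := a.isLt; omega⟩

/-- The displacement (along `u`) of the center of the subsegment corresponding to the
`Q`-piece of `i` inside the segment of the `P`-piece of `i`, for a refinement `Q` of `P`. -/
def offsetQ (ρ : ℝ) (c : Fin (n + 2) → ℝ) (P Q : IntervalPartition n) (i : Fin (n + 2)) : ℝ :=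
  ρ * (- cPiece c P (P.toFun i) / 2
    + (∑ j ∈ Finset.univ.filter fun j => P.toFun j = P.toFun i ∧ Q.toFun j < Q.toFun i, c j)
    + cPiece c Q (Q.toFun i) / 2)

/-- The affine injection `e_{P,Q} : (ℝ^d)^p → (ℝ^d)^q` for a refinement `Q` of `P`. -/
def eMap (ρ : ℝ) (c : Fin (n + 2) → ℝ) (P Q : IntervalPartition n) {d : ℕ}
    (x : Vec P.p d) : Vec Q.p d := WithLp.toLp 2 fun b =>
  extTuple ρ c P x (P.toFun (minElt Q (elt Q.p b)))
    + offsetQ ρ c P Q (minElt Q (elt Q.p b)) • uVec d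

/-- The affine injection `e_P : (ℝ^d)^p → (ℝ^d)^n`. -/
def ePt (ρ : ℝ) (c : Fin (n + 2) → ℝ) (P : IntervalPartition n) {d : ℕ}
    (x : Vec P.p d) : Vec n d :=
  eMap ρ c P (finest n) x

/-- `ε_P = ε/8^{n-p}`. -/
def epsP (ε : ℝ) (P : IntervalPartition n) : ℝ := ε / 8 ^ (n - P.p)

/-- The open `ε_P`-neighborhood `ν_P` of `e_P((ℝ^d)^p)` in `(ℝ^d)^n`. -/
def nuP (ρ ε : ℝ) (c : Fin (n + 2) → ℝ) (P : IntervalPartition n) (d : ℕ) : Set (Vec n d) :=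
  {y | ∃ x : Vec P.p d, ‖y - ePt ρ c P x‖ < epsP ε P}

/-- The orthogonal projection `π_P : (ℝ^d)^n → (ℝ^d)^p`, i.e. the unique minimizer of
`x ↦ |y - e_P(x)|`; explicitly, its `α`-component is the average of `y_i - o_i u` over the
elements `i` of the piece `α`, where `o_i` is the offset of `i` in `e_P`. -/
def projP (ρ : ℝ) (c : Fin (n + 2) → ℝ) (P : IntervalPartition n) {d : ℕ}
    (y : Vec n d) : Vec P.p d := WithLp.toLp 2 fun a =>
  ((Finset.univ.filter fun i : Fin n => P.toFun (elt n i) = elt P.p a).card : ℝ)⁻¹ •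
    ∑ i ∈ Finset.univ.filter fun i : Fin n => P.toFun (elt n i) = elt P.p a,
      (y i - offsetQ ρ c P (finest n) (elt n i) • uVec d)

/-- The component of a tuple `x ∈ (ℝ^d)^m` at a non-extremal vertex index `w` (and `0` at
the extremal indices, where there is no component). -/
def comp {m d : ℕ} (x : Vec m d) (w : Fin (m + 2)) : Rd d :=
  if h : 0 < (w : ℕ) ∧ (w : ℕ) < m + 1 then x ⟨(w : ℕ) - 1, by omega⟩ else 0

/-- `d_{αβ}(P) = ρ c_{αβ} - ε_P`. -/
def dBound (ρ ε : ℝ) (c : Fin (n + 2) → ℝ) (P : IntervalPartition n)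
    (a b : Fin (P.p + 2)) : ℝ :=
  ρ * cBetween c P a b - epsP ε P

/-- `D_{αβ} = {x : |x_α - x_β| ≤ d_{αβ}(P)}`. -/
def Dset (ρ ε : ℝ) (c : Fin (n + 2) → ℝ) (P : IntervalPartition n) (d : ℕ)
    (a b : Fin (P.p + 2)) : Set (Vec P.p d) :=
  {x | ‖comp x a - comp x b‖ ≤ dBound ρ ε c P a b}

/-- `E_α`. -/
def Eset (ρ ε : ℝ) (c : Fin (n + 2) → ℝ) (P : IntervalPartition n) (d : ℕ)
    (a : Fin (P.p + 2)) : Set (Vec P.p d) :=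
  {x | 1 - ρ * cPiece c P a / 2 + epsP ε P ≤ ‖comp x a‖
    ∨ fst (comp x a) ≤ -1 + ρ * cLE c P a - epsP ε P
    ∨ 1 - ρ * cGE c P a + epsP ε P ≤ fst (comp x a)}

/-- `E_P = ⋃_α E_α` over the non-extremal pieces `α`. -/
def EsetP (ρ ε : ℝ) (c : Fin (n + 2) → ℝ) (P : IntervalPartition n) (d : ℕ) :
    Set (Vec P.p d) :=
  ⋃ a ∈ {a : Fin (P.p + 2) | 0 < (a : ℕ) ∧ (a : ℕ) < P.p + 1}, Eset ρ ε c P d a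

/-- The configuration space `E(P) ⊂ (ℝ^d)^p`. -/
def Econf (ρ : ℝ) (c : Fin (n + 2) → ℝ) (P : IntervalPartition n) (d : ℕ) :
    Set (Vec P.p d) :=
  {x | (∀ w : Fin (P.p + 2), 0 < (w : ℕ) → (w : ℕ) < P.p + 1 →
          ‖comp x w‖ ≤ 1 - ρ * cPiece c P w / 2 ∧
          -1 + ρ * cLE c P w ≤ fst (comp x w) ∧
          fst (comp x w) ≤ 1 - ρ * cGE c P w) ∧
       ∀ w w' : Fin (P.p + 2), 0 < (w : ℕ) → (w' : ℕ) < P.p + 1 → w < w' →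
          ρ * cBetween c P w w' ≤ ‖comp x w - comp x w'‖}

/-! ### Graphs -/

/-- A graph on a partition with `m` non-extremal pieces: a finite set of edges, each being a
pair of vertices (vertices are the pieces, i.e. elements of `Fin (m+2)`). -/
abbrev GraphOn (m : ℕ) := Finset (Fin (m + 2) × Fin (m + 2))

/-- The edges go between non-extremal vertices and are increasing pairs. -/
def IsGraphOn {m : ℕ} (G : GraphOn m) : Prop :=
  ∀ e ∈ G, 0 < (e.1 : ℕ) ∧ e.1 < e.2 ∧ (e.2 : ℕ) < m + 1

/-- Adjacency relation of a graph. -/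
def adj {m : ℕ} (G : GraphOn m) (a b : Fin (m + 2)) : Prop :=
  ∃ e ∈ G, (e.1 = a ∧ e.2 = b) ∨ (e.1 = b ∧ e.2 = a)

/-- `conn G a b` : `a` and `b` lie in the same connected component of `G`. -/
def conn {m : ℕ} (G : GraphOn m) : Fin (m + 2) → Fin (m + 2) → Prop :=
  Relation.ReflTransGen (adj G)

/-- A vertex is discrete if no edge is incident with it. -/
def IsDiscrete {m : ℕ} (G : GraphOn m) (a : Fin (m + 2)) : Prop :=
  ∀ e ∈ G, e.1 ≠ a ∧ e.2 ≠ a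

lemma adj_symm {m : ℕ} (G : GraphOn m) : Symmetric (adj G) := by
  rintro a b ⟨e, he, h⟩
  exact ⟨e, he, h.symm⟩

/-- Being in the same connected component is an equivalence relation. -/
def connSetoid {m : ℕ} (G : GraphOn m) : Setoid (Fin (m + 2)) where
  r := conn G
  iseqv := by
    refine ⟨fun _ => Relation.ReflTransGen.refl, ?_, fun h h' => h.trans h'⟩
    intro x y h
    induction h with
    | refl => exact Relation.ReflTransGen.refl
    | tail _ hab ih => exact Relation.ReflTransGen.head (adj_symm G hab) ih

/-- The number of connected components of a graph (all `m+2` vertices included). -/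
def ncomp {m : ℕ} (G : GraphOn m) : ℕ := Fintype.card (Quotient (connSetoid G))

/-- `e` is a bridge of `G` if removing it increases the number of connected components. -/
def IsBridge {m : ℕ} (G : GraphOn m) (e : Fin (m + 2) × Fin (m + 2)) : Prop :=
  e ∈ G ∧ ncomp G < ncomp (G.erase e)

/-! ### Condensed maps -/

/-- The convex hull of `{f_j(x) : j ∈ α}`. -/
def hullPoints {d : ℕ} (P : IntervalPartition n) {X : Type*} (f : X → Vec n d) (x : X)
    (a : Fin (P.p + 2)) : Set (Rd d) :=
  convexHull ℝ {q | ∃ j : Fin n, P.toFun (elt n j) = a ∧ q = f x j}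

/-- `a` is a base (of its connected component of `G`) for the map `f`. -/
def IsBase {d : ℕ} (P : IntervalPartition n) (G : GraphOn P.p) {X : Type*}
    (f : X → Vec n d) (a : Fin (P.p + 2)) : Prop :=
  (∀ x : X, ∀ b, conn G a b → ∀ i : Fin n, P.toFun (elt n i) = b →
      f x i ∈ hullPoints P f x a)
  ∧ ∀ e ∈ G, conn G a e.1 → ¬(e.1 < a ∧ e.2 < a)

/-- A map `f : X → (ℝ^d)^n` is `G`-condensed: it is proper and each connected component
of `G` has a base. -/
def IsCondensed {d : ℕ} (P : IntervalPartition n) (G : GraphOn P.p) {X : Type*}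
    [TopologicalSpace X] (f : X → Vec n d) : Prop :=
  IsProperMap f ∧ ∀ a : Fin (P.p + 2), ∃ b, conn G a b ∧ IsBase P G f b

/-- `⋂_{(α,β) ∈ E(G)} D_{αβ}`. -/
def interD (ρ ε : ℝ) (c : Fin (n + 2) → ℝ) (P : IntervalPartition n) (d : ℕ)
    (G : GraphOn P.p) : Set (Vec P.p d) :=
  ⋂ e ∈ G, Dset ρ ε c P d e.1 e.2

/-- `U_G`. -/
def Uset (ρ ε : ℝ) (c : Fin (n + 2) → ℝ) (P : IntervalPartition n) (d : ℕ)
    (G : GraphOn P.p) : Set (Vec n d) :=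
  (nuP ρ ε c P d)ᶜ ∪ (projP ρ c P) ⁻¹' (interD ρ ε c P d G)

/-- Product of the projections to the first coordinate. -/
def p1 {m d : ℕ} (y : Vec m d) : Fin m → ℝ := fun i => fst (y i)

/-- `U_G^1`. -/
def Uset1 (ρ ε : ℝ) (c : Fin (n + 2) → ℝ) (P : IntervalPartition n) (d : ℕ)
    (G : GraphOn P.p) : Set (Vec n d) :=
  (p1 ⁻¹' (p1 '' nuP ρ ε c P d))ᶜ
    ∪ p1 ⁻¹' (p1 '' ((projP ρ c P) ⁻¹' (interD ρ ε c P d G)))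

/-! ### Contractions and homotopies -/

/-- The translation vector `A_e(s)` of the `e`-contraction. -/
def Acontr {d : ℕ} (P : IntervalPartition n) (G : GraphOn P.p)
    (e : Fin (P.p + 2) × Fin (P.p + 2)) (s : ℝ) : Vec n d := WithLp.toLp 2 fun i =>
  if conn (G.erase e) (P.toFun (elt n i)) e.1 then s • vVec d
  else if conn (G.erase e) (P.toFun (elt n i)) e.2 then -(s • vVec d) else 0

/-- The `e`-contraction `F(x,s) = f(x) + A_e(s)` of `f` for `G`. -/
def econtr {d : ℕ} (P : IntervalPartition n) (G : GraphOn P.p)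
    (e : Fin (P.p + 2) × Fin (P.p + 2)) {X : Type*} (f : X → Vec n d) :
    X × ↥(Set.Ici (0 : ℝ)) → Vec n d :=
  fun q => f q.1 + Acontr P G e (q.2 : ℝ)

/-- The `(e,e')`-contraction `F(x,s₁,s₂) = f(x) + A_e(s₁) + A_{e'}(s₂)` of `f` for `G`. -/
def eecontr {d : ℕ} (P : IntervalPartition n) (G : GraphOn P.p)
    (e e' : Fin (P.p + 2) × Fin (P.p + 2)) {X : Type*} (f : X → Vec n d) :
    X × ↥(Set.Ici (0 : ℝ)) × ↥(Set.Ici (0 : ℝ)) → Vec n d :=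
  fun q => f q.1 + Acontr P G e (q.2.1 : ℝ) + Acontr P G e' (q.2.2 : ℝ)

/-- The `(i,σ)`-contraction of a map `F` (σ = ±1): add `σsu` to the `i`-th component and
`-σsu` to the `(i+1)`-th component. Components are numbered `1,…,m` (the `k`-th coordinate
of `Vec m d` is component number `k+1`). -/
def icontr {m d : ℕ} {Y : Type*} (F : Y → Vec m d) (i : ℕ) (σ : ℝ) :
    Y × ↥(Set.Ici (0 : ℝ)) → Vec m d :=
  fun q => WithLp.toLp 2 fun k => F q.1 k +
    (if (k : ℕ) + 1 = i then σ * (q.2 : ℝ)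
     else if (k : ℕ) + 1 = i + 1 then -(σ * (q.2 : ℝ)) else 0) • uVec d

/-- The straight homotopy from `f` to `g`. -/
def straightH {V : Type*} [AddCommGroup V] [Module ℝ V] {Y : Type*} (f g : Y → V) :
    Y × ↥(Set.Icc (0 : ℝ) 1) → V :=
  fun q => (1 - (q.2 : ℝ)) • f q.1 + (q.2 : ℝ) • g q.1

/-! ### Merging pieces (the face operations δ) -/

/-- Value of the vertex map merging the pieces (0-based) `k` and `k+1`. -/
def vmapVal (m k : ℕ) (a : ℕ) : ℕ :=
  if m = 0 then a else min (if a ≤ k then a else a - 1) m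

/-- The vertex map of the merge, `Fin (m+2) → Fin (m-1+2)`. -/
def vmapFin (m k : ℕ) (a : Fin (m + 2)) : Fin (m - 1 + 2) :=
  ⟨vmapVal m k (a : ℕ), by have := a.isLt; unfold vmapVal; split <;> omega⟩

/-- The partition `δ_kP` obtained from `P` by uniting its `(k+1)`-th and `(k+2)`-th pieces
(i.e. the pieces of 0-based indices `k` and `k+1`). -/
def deltaPart (P : IntervalPartition n) (k : ℕ) : IntervalPartition n where
  p := P.p - 1
  toFun := fun i => vmapFin P.p k (P.toFun i)
  mono := by
    intro a b hab
    have h2 : (P.toFun a : ℕ) ≤ (P.toFun b : ℕ) := P.mono hab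
    simp only [vmapFin, Fin.mk_le_mk, vmapVal]
    split_ifs <;> omega
  surj := by
    intro b
    have hb := b.isLt
    by_cases h0 : P.p = 0
    · obtain ⟨i, hi⟩ := P.surj ⟨(b : ℕ), by omega⟩
      refine ⟨i, Fin.ext ?_⟩
      simp only [vmapFin, vmapVal, hi, h0, if_true]
    · rcases le_or_gt (b : ℕ) k with hbk | hbk
      · obtain ⟨i, hi⟩ := P.surj ⟨(b : ℕ), by omega⟩
        refine ⟨i, Fin.ext ?_⟩
        simp only [vmapFin, vmapVal, hi, h0, if_false]
        split_ifs <;> omega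
      · obtain ⟨i, hi⟩ := P.surj ⟨(b : ℕ) + 1, by omega⟩
        refine ⟨i, Fin.ext ?_⟩
        simp only [vmapFin, vmapVal, hi, h0, if_false]
        split_ifs <;> omega

/-- For a refinement pair (`Q` refines `P`): the piece of `P` containing a given piece of
`Q`. -/
def pieceMap (Q P : IntervalPartition n) : Fin (Q.p + 2) → Fin (P.p + 2) :=
  fun b => P.toFun (minElt Q b)

/-- The image graph on a coarser partition (e.g. `δ_iG` on `δ_iQ`). -/
def pushGraph (Q P : IntervalPartition n) (G : GraphOn Q.p) : GraphOn P.p :=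
  G.image fun e => (pieceMap Q P e.1, pieceMap Q P e.2)

/-- The image graph is an honest graph: no loops nor double edges are created
(injectivity of the edge map) and no edge is incident with an extremal piece. -/
def GoodPush (Q P : IntervalPartition n) (G : GraphOn Q.p) : Prop :=
  Set.InjOn (fun e : Fin (Q.p + 2) × Fin (Q.p + 2) => (pieceMap Q P e.1, pieceMap Q P e.2)) ↑G
  ∧ IsGraphOn (pushGraph Q P G)


/-! ### Auxiliary lemmas for Statement 1 -/

section Aux

theorem mean_min {E : Type*} [NormedAddCommGroup E] [InnerProductSpace ℝ E] {ι : Type*}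
    (s : Finset ι) (hs : s.Nonempty) (v : ι → E) (x : E) :
    ∑ i ∈ s, ‖v i - (s.card : ℝ)⁻¹ • ∑ i ∈ s, v i‖^2 ≤ ∑ i ∈ s, ‖v i - x‖^2 := by
  set m : E := (s.card : ℝ)⁻¹ • ∑ i ∈ s, v i with hm
  have hcard : (s.card : ℝ) ≠ 0 := Nat.cast_ne_zero.mpr (Finset.card_ne_zero_of_mem hs.choose_spec)
  have hzero : ∑ i ∈ s, (v i - m) = 0 := by
    rw [Finset.sum_sub_distrib, Finset.sum_const, sub_eq_zero, hm,
      ← Nat.cast_smul_eq_nsmul ℝ, smul_smul, mul_inv_cancel₀ hcard, one_smul]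
  have hexp : ∀ i, ‖v i - x‖^2 = ‖v i - m‖^2 + 2 * (inner ℝ (v i - m) (m - x) : ℝ) + ‖m - x‖^2 :=
    fun i => by rw [← sub_add_sub_cancel (v i) m x]; exact norm_add_sq_real _ _
  have key : ∑ i ∈ s, ‖v i - x‖^2
      = ∑ i ∈ s, ‖v i - m‖^2 + (s.card : ℝ) * ‖m - x‖^2 := by
    simp only [hexp]
    rw [Finset.sum_add_distrib, Finset.sum_add_distrib, ← Finset.mul_sum, ← sum_inner, hzero,
      inner_zero_left, mul_zero, add_zero, Finset.sum_const, nsmul_eq_mul]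
  have : 0 ≤ (s.card : ℝ) * ‖m - x‖^2 := by positivity
  linarith

lemma toFun_minElt (Q : IntervalPartition n) (b : Fin (Q.p + 2)) :
    Q.toFun (minElt Q b) = b := by
  have := Finset.min'_mem (fiber Q b) (fiber_nonempty Q b)
  simp only [fiber, Finset.mem_filter, Finset.mem_univ, true_and] at this
  exact this

lemma fiber_finest (j : Fin (n + 2)) : fiber (finest n) j = {j} := by
  ext i; unfold fiber; rw [Finset.filter_congr_decidable, Finset.mem_filter, Finset.mem_singleton]
  exact ⟨fun h => h.2, fun h => ⟨Finset.mem_univ _, h⟩⟩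

lemma minElt_finest (j : Fin (n + 2)) : minElt (finest n) j = j := by
  simp [minElt, fiber_finest]

lemma cPiece_finest (c : Fin (n + 2) → ℝ) (j : Fin (n + 2)) :
    cPiece c (finest n) j = c j := by
  simp [cPiece, fiber_finest]

lemma toFun_zero (P : IntervalPartition n) : P.toFun 0 = 0 := by
  obtain ⟨i, hi⟩ := P.surj 0
  have : P.toFun 0 ≤ P.toFun i := P.mono (Fin.zero_le i)
  rw [hi] at this
  exact Fin.le_zero_iff.mp this

lemma toFun_last (P : IntervalPartition n) : P.toFun (Fin.last (n + 1)) = Fin.last (P.p + 1) := by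
  obtain ⟨i, hi⟩ := P.surj (Fin.last (P.p + 1))
  have : P.toFun i ≤ P.toFun (Fin.last (n + 1)) := P.mono (Fin.le_last i)
  rw [hi] at this
  exact Fin.last_le_iff.mp this

lemma lt_of_toFun_lt (P : IntervalPartition n) {i j : Fin (n + 2)}
    (h : P.toFun i < P.toFun j) : i < j := by
  by_contra hc
  exact absurd (P.mono (not_lt.mp hc)) (not_le.mpr h)

/-- The crucial sum splitting: for a refinement `Q` of `P`. -/
lemma sum_split (c : Fin (n + 2) → ℝ) (P Q : IntervalPartition n)
    (href : ∀ i j, Q.toFun i = Q.toFun j → P.toFun i = P.toFun j) (j : Fin (n + 2)) :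
    (∑ j' ∈ Finset.univ.filter
        (fun j' => P.toFun j' = P.toFun j ∧ Q.toFun j' < Q.toFun j), c j')
      + (∑ j' ∈ Finset.univ.filter
        (fun j' => Q.toFun j' = Q.toFun j ∧ j' < j), c j')
      = ∑ j' ∈ Finset.univ.filter
        (fun j' => P.toFun j' = P.toFun j ∧ j' < j), c j' := by
  rw [← Finset.sum_filter_add_sum_filter_not
    (Finset.univ.filter (fun j' => P.toFun j' = P.toFun j ∧ j' < j))
    (fun j' => Q.toFun j' < Q.toFun j)]
  congr 1
  · apply Finset.sum_congr _ (fun _ _ => rfl)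
    ext j'
    simp only [Finset.mem_filter, Finset.mem_univ, true_and]
    constructor
    · rintro ⟨h1, h3⟩; exact ⟨⟨h1, lt_of_toFun_lt Q h3⟩, h3⟩
    · rintro ⟨⟨h1, _⟩, h3⟩; exact ⟨h1, h3⟩
  · apply Finset.sum_congr _ (fun _ _ => rfl)
    ext j'
    simp only [Finset.mem_filter, Finset.mem_univ, true_and]
    constructor
    · rintro ⟨h1, h2⟩
      exact ⟨⟨href _ _ h1, h2⟩, not_lt.mpr h1.ge⟩
    · rintro ⟨⟨_, h2⟩, h3⟩
      exact ⟨le_antisymm (Q.mono h2.le) (not_lt.mp h3), h2⟩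

lemma offset_add (ρ : ℝ) (c : Fin (n + 2) → ℝ) (P Q : IntervalPartition n)
    (href : ∀ i j, Q.toFun i = Q.toFun j → P.toFun i = P.toFun j) (j : Fin (n + 2)) :
    offsetQ ρ c P Q j + offsetQ ρ c Q (finest n) j = offsetQ ρ c P (finest n) j := by
  have hs := sum_split c P Q href j
  have h1 : offsetQ ρ c P (finest n) j = ρ * (-cPiece c P (P.toFun j) / 2
      + ∑ j' ∈ Finset.univ.filter (fun j' => P.toFun j' = P.toFun j ∧ j' < j), c j' + c j / 2) := by
    rw [← cPiece_finest c j]; rfl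
  have h2 : offsetQ ρ c Q (finest n) j = ρ * (-cPiece c Q (Q.toFun j) / 2
      + ∑ j' ∈ Finset.univ.filter (fun j' => Q.toFun j' = Q.toFun j ∧ j' < j), c j' + c j / 2) := by
    rw [← cPiece_finest c j]; rfl
  rw [h1, h2, offsetQ]
  rw [← hs]
  ring

lemma ePt_apply {d : ℕ} (ρ : ℝ) (c : Fin (n + 2) → ℝ) (P : IntervalPartition n)
    (x : Vec P.p d) (i : Fin n) :
    ePt ρ c P x i = extTuple ρ c P x (P.toFun (elt n i))
      + offsetQ ρ c P (finest n) (elt n i) • uVec d := by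
  simp only [ePt, eMap, minElt_finest]
  rw [show minElt (finest n) (elt (finest n).p i) = elt n i from minElt_finest _]

lemma cPiece_split (c : Fin (n + 2) → ℝ) (P Q : IntervalPartition n)
    (href : ∀ i j, Q.toFun i = Q.toFun j → P.toFun i = P.toFun j) (j : Fin (n + 2))
    (hQL : Q.toFun j = Fin.last (Q.p + 1)) :
    cPiece c P (P.toFun j)
      = (∑ j' ∈ Finset.univ.filter
          (fun j' => P.toFun j' = P.toFun j ∧ Q.toFun j' < Q.toFun j), c j')
        + cPiece c Q (Q.toFun j) := by
  rw [cPiece, ← Finset.sum_filter_add_sum_filter_not (fiber P (P.toFun j))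
    (fun j' => Q.toFun j' < Q.toFun j)]
  congr 1
  · apply Finset.sum_congr _ (fun _ _ => rfl)
    rw [fiber, Finset.filter_filter]
  · rw [cPiece]
    apply Finset.sum_congr _ (fun _ _ => rfl)
    ext j'
    simp only [fiber, Finset.mem_filter, Finset.mem_univ, true_and]
    constructor
    · rintro ⟨_, h2⟩
      have : Q.toFun j' ≤ Q.toFun j := by rw [hQL]; exact Fin.le_last _
      exact le_antisymm this (not_lt.mp h2)
    · intro h1
      exact ⟨href _ _ h1, not_lt.mpr h1.ge⟩

lemma ePt_comp {d : ℕ} (ρ : ℝ) (c : Fin (n + 2) → ℝ) (P Q : IntervalPartition n)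
    (href : ∀ i j, Q.toFun i = Q.toFun j → P.toFun i = P.toFun j) (x : Vec P.p d) :
    ePt ρ c Q (eMap ρ c P Q x) = ePt ρ c P x := by
  apply PiLp.ext; intro i
  rw [ePt_apply, ePt_apply]
  set j := elt n i with hj
  have ha := offset_add ρ c P Q href j
  by_cases h0 : (Q.toFun j : ℕ) = 0
  · have hQ0 : Q.toFun j = 0 := Fin.ext h0
    have hP0 : P.toFun j = 0 := by
      have hq : Q.toFun j = Q.toFun 0 := by rw [hQ0, toFun_zero Q]
      rw [href j 0 hq, toFun_zero P]
    have hSPQ : (∑ j' ∈ Finset.univ.filter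
        (fun j' => P.toFun j' = P.toFun j ∧ Q.toFun j' < Q.toFun j), c j') = 0 := by
      apply Finset.sum_eq_zero
      intro j' hj'
      rw [Finset.mem_filter] at hj'
      rw [hQ0] at hj'
      exact absurd hj'.2.2 (Fin.not_lt_zero _)
    have hoff : offsetQ ρ c P Q j
        = ρ * (- cPiece c P (P.toFun j) / 2 + 0 + cPiece c Q (Q.toFun j) / 2) := by
      rw [offsetQ, hSPQ]
    have hQfin : offsetQ ρ c Q (finest n) j = offsetQ ρ c P (finest n) j
        + ρ * cPiece c P (P.toFun j) / 2 - ρ * cPiece c Q (Q.toFun j) / 2 := by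
      rw [← ha, hoff]; ring
    rw [hQ0, hP0] at hQfin ⊢
    rw [hQfin]
    rw [extTuple, extTuple, dif_pos (show ((0 : Fin (Q.p + 2)) : ℕ) = 0 from rfl),
      dif_pos (show ((0 : Fin (P.p + 2)) : ℕ) = 0 from rfl)]
    rw [← add_smul, ← add_smul]
    congr 1
    ring
  · by_cases h1 : (Q.toFun j : ℕ) = Q.p + 1
    · have hQL : Q.toFun j = Fin.last (Q.p + 1) := Fin.ext h1
      have hPL : P.toFun j = Fin.last (P.p + 1) := by
        have hq : Q.toFun j = Q.toFun (Fin.last (n + 1)) := by rw [hQL, toFun_last Q]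
        rw [href j _ hq, toFun_last P]
      have hsplit := cPiece_split c P Q href j hQL
      have hoff : offsetQ ρ c P Q j
          = ρ * (cPiece c P (P.toFun j) / 2 - cPiece c Q (Q.toFun j) / 2) := by
        rw [offsetQ]
        have : (∑ j' ∈ Finset.univ.filter
            (fun j' => P.toFun j' = P.toFun j ∧ Q.toFun j' < Q.toFun j), c j')
            = cPiece c P (P.toFun j) - cPiece c Q (Q.toFun j) := by
          rw [hsplit]; ring
        rw [this]; ring
      have hQfin : offsetQ ρ c Q (finest n) j = offsetQ ρ c P (finest n) j
          - ρ * cPiece c P (P.toFun j) / 2 + ρ * cPiece c Q (Q.toFun j) / 2 := by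
        rw [← ha, hoff]; ring
      rw [hQL, hPL] at hQfin ⊢
      rw [hQfin]
      have e1 : extTuple ρ c Q (eMap ρ c P Q x) (Fin.last (Q.p + 1))
          = (1 - ρ * cPiece c Q (Fin.last (Q.p + 1)) / 2) • uVec d := by
        rw [extTuple, dif_neg (by simp), dif_pos (by simp)]
      have e2 : extTuple ρ c P x (Fin.last (P.p + 1))
          = (1 - ρ * cPiece c P (Fin.last (P.p + 1)) / 2) • uVec d := by
        rw [extTuple, dif_neg (by simp), dif_pos (by simp)]
      rw [e1, e2, ← add_smul, ← add_smul]
      congr 1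
      ring
    · have hi1 : 0 < (Q.toFun j : ℕ) := Nat.pos_of_ne_zero h0
      have hi2 : (Q.toFun j : ℕ) < Q.p + 1 := by
        have := (Q.toFun j).isLt; omega
      rw [extTuple]
      rw [dif_neg h0, dif_neg h1]
      have helt : elt Q.p ⟨(Q.toFun j : ℕ) - 1, by omega⟩ = Q.toFun j := by
        apply Fin.ext
        simp only [elt]
        omega
      rw [eMap, WithLp.ofLp_toLp, helt]
      set m := minElt Q (Q.toFun j) with hmdef
      have hQm : Q.toFun m = Q.toFun j := toFun_minElt Q _
      have hPm : P.toFun m = P.toFun j := href m j hQm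
      have hoffm : offsetQ ρ c P Q m = offsetQ ρ c P Q j := by
        simp only [offsetQ, hQm, hPm]
      rw [hPm, hoffm, add_assoc, ← add_smul, ha]

lemma proj_min {d : ℕ} (ρ : ℝ) (c : Fin (n + 2) → ℝ) (P : IntervalPartition n)
    (y : Vec n d) (x : Vec P.p d) :
    ‖y - ePt ρ c P (projP ρ c P y)‖ ≤ ‖y - ePt ρ c P x‖ := by
  have key : ∀ z : Vec P.p d, ‖y - ePt ρ c P z‖^2
      = ∑ a : Fin (P.p + 2), ∑ i ∈ Finset.univ.filter
          (fun i : Fin n => P.toFun (elt n i) = a), ‖y i - ePt ρ c P z i‖^2 := by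
    intro z
    have hsub : ∀ i, (y - ePt ρ c P z) i = y i - ePt ρ c P z i := fun _ => rfl
    rw [PiLp.norm_sq_eq_of_L2]
    simp only [hsub]
    rw [← Finset.sum_fiberwise Finset.univ (fun i : Fin n => P.toFun (elt n i))
        (fun i => ‖y i - ePt ρ c P z i‖^2)]
  have h2 : ‖y - ePt ρ c P (projP ρ c P y)‖^2 ≤ ‖y - ePt ρ c P x‖^2 := by
    rw [key, key]
    apply Finset.sum_le_sum
    intro a _
    set s := Finset.univ.filter (fun i : Fin n => P.toFun (elt n i) = a) with hs
    by_cases hex : (a : ℕ) = 0 ∨ (a : ℕ) = P.p + 1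
    · apply le_of_eq
      apply Finset.sum_congr rfl
      intro i hi
      have hPi : P.toFun (elt n i) = a := by
        rw [hs, Finset.mem_filter] at hi; exact hi.2
      have : extTuple ρ c P (projP ρ c P y) a = extTuple ρ c P x a := by
        rw [extTuple, extTuple]
        rcases hex with h | h
        · rw [dif_pos h, dif_pos h]
        · have h0' : ¬(a : ℕ) = 0 := by omega
          rw [dif_neg h0', dif_neg h0', dif_pos h, dif_pos h]
      rw [ePt_apply, ePt_apply, hPi, this]
    · push_neg at hex
      have ha1 : 0 < (a : ℕ) := Nat.pos_of_ne_zero hex.1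
      have ha2 : (a : ℕ) < P.p + 1 := by have := a.isLt; omega
      set a' : Fin P.p := ⟨(a : ℕ) - 1, by omega⟩ with ha'
      have helt : elt P.p a' = a := by apply Fin.ext; simp only [elt, ha']; omega
      have hext : ∀ z : Vec P.p d, extTuple ρ c P z a = z a' := fun z => by
        rw [extTuple, dif_neg hex.1, dif_neg hex.2]
      have hsne : s.Nonempty := by
        obtain ⟨jj, hjj⟩ := P.surj a
        have hjj0 : (jj : ℕ) ≠ 0 := by
          intro h
          rw [show jj = 0 from Fin.ext h, toFun_zero P] at hjj
          exact hex.1 (by rw [← hjj]; rfl)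
        have hjjl : (jj : ℕ) ≠ n + 1 := by
          intro h
          rw [show jj = Fin.last (n + 1) from Fin.ext h, toFun_last P] at hjj
          exact hex.2 (by rw [← hjj]; rfl)
        have hlt : (jj : ℕ) - 1 < n := by have := jj.isLt; omega
        refine ⟨⟨(jj : ℕ) - 1, hlt⟩, ?_⟩
        rw [hs, Finset.mem_filter]
        refine ⟨Finset.mem_univ _, ?_⟩
        have : elt n ⟨(jj : ℕ) - 1, hlt⟩ = jj := by
          apply Fin.ext; simp only [elt]; omega
        rw [this, hjj]
      have hterm : ∀ (z : Vec P.p d) (i : Fin n), i ∈ s →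
          ‖y i - ePt ρ c P z i‖^2
            = ‖(y i - offsetQ ρ c P (finest n) (elt n i) • uVec d) - z a'‖^2 := by
        intro z i hi
        have hPi : P.toFun (elt n i) = a := by
          rw [hs, Finset.mem_filter] at hi; exact hi.2
        rw [ePt_apply, hPi, hext]
        congr 1
        abel_nf
      rw [Finset.sum_congr rfl (hterm (projP ρ c P y)),
        Finset.sum_congr rfl (hterm x)]
      have hproj : projP ρ c P y a'
          = (s.card : ℝ)⁻¹ • ∑ i ∈ s,
              (y i - offsetQ ρ c P (finest n) (elt n i) • uVec d) := by
        simp only [projP, PiLp.toLp_apply, helt, hs]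
      rw [hproj]
      exact mean_min s hsne _ (x a')
  have := Real.sqrt_le_sqrt h2
  rwa [Real.sqrt_sq (norm_nonneg _), Real.sqrt_sq (norm_nonneg _)] at this

end Aux

/-- if `Q` is a subdivision of `P` then the image of `e_P` is contained in the
image of `e_Q`; consequently the distance of any `y` to the image of `e_Q` (realized at the
orthogonal projection) is at most its distance to the image of `e_P`, and `ν_P ⊆ ν_Q`. -/
theorem statement_1
    (n d : ℕ) (hn : 1 ≤ n) (hd : 1 ≤ d) (ρ ε : ℝ) (c : Fin (n + 2) → ℝ)
    (hρ0 : 0 < ρ) (hρ1 : ρ < 1) (hε0 : 0 < ε) (hc : ∀ i, 0 < c i)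
    (hsum : ∑ i, c i = 1) (hc0 : 100 * ε / ρ < c 0)
    (hci : ∀ i : Fin (n + 2), 1 ≤ (i : ℕ) →
      100 * (ε / ρ + ∑ j ∈ Finset.univ.filter (fun j : Fin (n + 2) => (j : ℕ) < (i : ℕ)), c j)
        < c i)
    (P Q : IntervalPartition n) (hQP : Subdivides Q P) :
    (Set.range (fun x : Vec P.p d => ePt ρ c P x) ⊆
        Set.range (fun x : Vec Q.p d => ePt ρ c Q x)) ∧
    (∀ y : Vec n d,
        ‖y - ePt ρ c Q (projP ρ c Q y)‖ ≤ ‖y - ePt ρ c P (projP ρ c P y)‖) ∧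
    nuP ρ ε c P d ⊆ nuP ρ ε c Q d := by
  obtain ⟨href, hpp⟩ := hQP
  have part1 : Set.range (fun x : Vec P.p d => ePt ρ c P x)
      ⊆ Set.range (fun x : Vec Q.p d => ePt ρ c Q x) := by
    rintro _ ⟨x, rfl⟩
    exact ⟨eMap ρ c P Q x, ePt_comp ρ c P Q href x⟩
  have part2 : ∀ y : Vec n d,
      ‖y - ePt ρ c Q (projP ρ c Q y)‖ ≤ ‖y - ePt ρ c P (projP ρ c P y)‖ := by
    intro y
    obtain ⟨z, hz⟩ := part1 ⟨projP ρ c P y, rfl⟩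
    calc ‖y - ePt ρ c Q (projP ρ c Q y)‖ ≤ ‖y - ePt ρ c Q z‖ := proj_min ρ c Q y z
    _ = _ := by simp only at hz; rw [hz]
  refine ⟨part1, part2, ?_⟩
  rintro y ⟨x, hx⟩
  have heps : epsP ε P ≤ epsP ε Q := by
    rw [epsP, epsP]
    have hle : (8:ℝ)^(n - Q.p) ≤ (8:ℝ)^(n - P.p) := by
      apply pow_le_pow_right₀ (by norm_num) (Nat.sub_le_sub_left (le_of_lt hpp) n)
    apply div_le_div_of_nonneg_left hε0.le (by positivity) hle
  refine ⟨projP ρ c Q y, ?_⟩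
  calc ‖y - ePt ρ c Q (projP ρ c Q y)‖ ≤ ‖y - ePt ρ c P (projP ρ c P y)‖ := part2 y
  _ ≤ ‖y - ePt ρ c P x‖ := proj_min ρ c P y x
  _ < epsP ε P := hx
  _ ≤ epsP ε Q := heps

end SinhaKnots
end
end

section
/- Let G be a graph on a partition Q of [n+1], f : X → (ℝ^d)^n a G-condensed map, and 0 ≤ i ≤ #Q−3. Suppose that the induced graph δ_iG is a graph on δ_iQ (i.e. it has no loops or double edges and no edge is incident with the minimum or maximum piece of δ_iQ), and that both the (i+1)-th and (i+2)-th pieces of Q are bases for f (of their respective connected components of G). Then f is δ_iG-condensed. -/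
open scoped BigOperators
open Finset

noncomputable section

namespace SinhaKnots

attribute [local instance] Classical.propDecidable

variable {n : ℕ}

/-! ### Auxiliary lemmas for statement 9 -/

lemma conn_symm' {m : ℕ} (G : GraphOn m) {a b : Fin (m + 2)} (h : conn G a b) : conn G b a := by
  induction h with
  | refl => exact Relation.ReflTransGen.refl
  | tail _ hab ih => exact Relation.ReflTransGen.head (adj_symm G hab) ih

lemma toFun_minElt_s9 (P : IntervalPartition n) (a : Fin (P.p + 2)) :
    P.toFun (minElt P a) = a := by
  have h : minElt P a ∈ fiber P a := Finset.min'_mem _ _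
  simpa [fiber] using h

lemma pieceMap_delta (Q : IntervalPartition n) (i : ℕ) (b : Fin (Q.p + 2)) :
    pieceMap Q (deltaPart Q i) b = vmapFin Q.p i b := by
  show vmapFin Q.p i (Q.toFun (minElt Q b)) = vmapFin Q.p i b
  rw [toFun_minElt_s9]

lemma vmap_val {m i : ℕ} (hi : i + 1 ≤ m) (a : Fin (m + 2)) :
    (vmapFin m i a : ℕ) = if (a : ℕ) ≤ i then (a : ℕ) else (a : ℕ) - 1 := by
  have := a.isLt
  simp only [vmapFin, vmapVal]
  split_ifs <;> omega

lemma vmap_eq_cases {m i : ℕ} (hi : i + 1 ≤ m) {a b : Fin (m + 2)}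
    (h : vmapFin m i a = vmapFin m i b) :
    a = b ∨ (((a : ℕ) = i ∨ (a : ℕ) = i + 1) ∧ ((b : ℕ) = i ∨ (b : ℕ) = i + 1)) := by
  have hv : (vmapFin m i a : ℕ) = (vmapFin m i b : ℕ) := by rw [h]
  rw [vmap_val hi, vmap_val hi] at hv
  have ha := a.isLt; have hb := b.isLt
  by_cases hab : (a : ℕ) = (b : ℕ)
  · exact Or.inl (Fin.ext hab)
  · right
    split_ifs at hv <;> omega

lemma vmap_surj' {m i : ℕ} (hi : i + 1 ≤ m) (b : Fin (m - 1 + 2)) :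
    ∃ a : Fin (m + 2), vmapFin m i a = b := by
  have hb := b.isLt
  rcases le_or_gt (b : ℕ) i with h | h
  · refine ⟨⟨(b : ℕ), by omega⟩, Fin.ext ?_⟩
    rw [vmap_val hi]; simp only [Fin.val_mk]; split_ifs <;> omega
  · refine ⟨⟨(b : ℕ) + 1, by omega⟩, Fin.ext ?_⟩
    rw [vmap_val hi]; simp only [Fin.val_mk]; split_ifs <;> omega

/-- Push forward connectivity along the merge map. -/
lemma conn_push {m i : ℕ} (G : GraphOn m) {u v : Fin (m + 2)} (h : conn G u v) :
    conn (G.image fun e => (vmapFin m i e.1, vmapFin m i e.2))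
      (vmapFin m i u) (vmapFin m i v) := by
  induction h with
  | refl => exact Relation.ReflTransGen.refl
  | tail _ hadj ih =>
      obtain ⟨e, he, hor⟩ := hadj
      refine Relation.ReflTransGen.tail ih
        ⟨(vmapFin m i e.1, vmapFin m i e.2), Finset.mem_image_of_mem _ he, ?_⟩
      rcases hor with ⟨h1, h2⟩ | ⟨h1, h2⟩
      · exact Or.inl ⟨by rw [h1], by rw [h2]⟩
      · exact Or.inr ⟨by rw [h1], by rw [h2]⟩

/-- The "merged" reachability relation: connected in `G`, possibly jumping once between
the two merged vertices `a` and `b`. -/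
def Rm {m : ℕ} (G : GraphOn m) (a b u v : Fin (m + 2)) : Prop :=
  conn G u v ∨ (conn G u a ∧ conn G b v) ∨ (conn G u b ∧ conn G a v)

lemma Rm_trans_conn {m : ℕ} {G : GraphOn m} {a b u v w : Fin (m + 2)}
    (h : Rm G a b u v) (h' : conn G v w) : Rm G a b u w := by
  rcases h with h | ⟨h1, h2⟩ | ⟨h1, h2⟩
  · exact Or.inl (h.trans h')
  · exact Or.inr (Or.inl ⟨h1, h2.trans h'⟩)
  · exact Or.inr (Or.inr ⟨h1, h2.trans h'⟩)

/-- Transport `Rm` across the identification of `v` with `w` (equal, or both merged). -/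
lemma Rm_glue {m : ℕ} {G : GraphOn m} {a b u v w : Fin (m + 2)}
    (h : Rm G a b u v)
    (hvw : v = w ∨ ((v = a ∨ v = b) ∧ (w = a ∨ w = b))) : Rm G a b u w := by
  rcases hvw with rfl | ⟨hv, hw⟩
  · exact h
  · have hua : conn G u a ∨ conn G u b := by
      rcases h with h | ⟨h1, _⟩ | ⟨h1, _⟩
      · rcases hv with hv | hv
        · exact Or.inl (hv ▸ h)
        · exact Or.inr (hv ▸ h)
      · exact Or.inl h1
      · exact Or.inr h1
    rcases hua with h | h <;> rcases hw with hw | hw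
    · exact Or.inl (hw ▸ h)
    · exact hw ▸ Or.inr (Or.inl ⟨h, Relation.ReflTransGen.refl⟩)
    · exact hw ▸ Or.inr (Or.inr ⟨h, Relation.ReflTransGen.refl⟩)
    · exact Or.inl (hw ▸ h)

/-- Pull back connectivity along the merge map. -/
lemma conn_pull {m i : ℕ} (hi : i + 1 ≤ m) (G : GraphOn m)
    {u : Fin (m + 2)} {w' : Fin (m - 1 + 2)}
    (h : conn (G.image fun e => (vmapFin m i e.1, vmapFin m i e.2)) (vmapFin m i u) w') :
    ∃ w : Fin (m + 2), vmapFin m i w = w' ∧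
      Rm G ⟨i, by omega⟩ ⟨i + 1, by omega⟩ u w := by
  set qa : Fin (m + 2) := ⟨i, by omega⟩ with hqa
  set qb : Fin (m + 2) := ⟨i + 1, by omega⟩ with hqb
  induction h with
  | refl => exact ⟨u, rfl, Or.inl Relation.ReflTransGen.refl⟩
  | @tail mid tgt _ hadj ih =>
      obtain ⟨w, hw, hRuw⟩ := ih
      obtain ⟨e', he', hor⟩ := hadj
      obtain ⟨e, he, hee⟩ := Finset.mem_image.1 he'
      have cases_of_eq : ∀ {x y : Fin (m + 2)}, vmapFin m i x = vmapFin m i y →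
          (x = y ∨ ((x = qa ∨ x = qb) ∧ (y = qa ∨ y = qb))) := by
        intro x y hxy
        rcases vmap_eq_cases hi hxy with h | ⟨hx, hy⟩
        · exact Or.inl h
        · right
          constructor
          · rcases hx with hx | hx
            · exact Or.inl (Fin.ext hx)
            · exact Or.inr (Fin.ext hx)
          · rcases hy with hy | hy
            · exact Or.inl (Fin.ext hy)
            · exact Or.inr (Fin.ext hy)
      rcases hor with ⟨h1, h2⟩ | ⟨h1, h2⟩
      · -- e'.1 = mid (= vmapFin w), e'.2 = new target
        have hv1 : vmapFin m i e.1 = vmapFin m i w := by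
          rw [hw, ← h1, ← hee]
        have hv2 : vmapFin m i e.2 = tgt := by rw [← h2, ← hee]
        refine ⟨e.2, hv2, ?_⟩
        have hRuw1 : Rm G qa qb u e.1 := Rm_glue hRuw (cases_of_eq hv1.symm)
        exact Rm_trans_conn hRuw1 (Relation.ReflTransGen.single ⟨e, he, Or.inl ⟨rfl, rfl⟩⟩)
      · have hv1 : vmapFin m i e.2 = vmapFin m i w := by
          rw [hw, ← h2, ← hee]
        have hv2 : vmapFin m i e.1 = tgt := by rw [← h1, ← hee]
        refine ⟨e.1, hv2, ?_⟩
        have hRuw1 : Rm G qa qb u e.2 := Rm_glue hRuw (cases_of_eq hv1.symm)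
        exact Rm_trans_conn hRuw1
          (Relation.ReflTransGen.single (adj_symm G ⟨e, he, Or.inl ⟨rfl, rfl⟩⟩))

/-- Reachability from the merged vertex pulls back to reachability from one of the two
merged vertices. -/
lemma merged_reach {m i : ℕ} (hi : i + 1 ≤ m) (G : GraphOn m) {w' : Fin (m - 1 + 2)}
    (h : conn (G.image fun e => (vmapFin m i e.1, vmapFin m i e.2))
      (vmapFin m i ⟨i, by omega⟩) w')
    {u0 : Fin (m + 2)} (hu0 : vmapFin m i u0 = w') :
    conn G ⟨i, by omega⟩ u0 ∨ conn G ⟨i + 1, by omega⟩ u0 := by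
  obtain ⟨w, hw, hR⟩ := conn_pull hi G h
  have hww : vmapFin m i w = vmapFin m i u0 := by rw [hw, hu0]
  have hcw : conn G ⟨i, by omega⟩ w ∨ conn G ⟨i + 1, by omega⟩ w := by
    rcases hR with h | ⟨_, h2⟩ | ⟨_, h2⟩
    · exact Or.inl h
    · exact Or.inr h2
    · exact Or.inl h2
  rcases vmap_eq_cases hi hww with rfl | ⟨_, hu⟩
  · exact hcw
  · rcases hu with hu | hu
    · refine Or.inl ?_
      rw [show u0 = (⟨i, by omega⟩ : Fin (m + 2)) from Fin.ext hu]
      exact Relation.ReflTransGen.refl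
    · refine Or.inr ?_
      rw [show u0 = (⟨i + 1, by omega⟩ : Fin (m + 2)) from Fin.ext hu]
      exact Relation.ReflTransGen.refl

/-- Reachability from the image of a vertex not connected to the merged vertex pulls back
to honest reachability in `G`. -/
lemma plain_reach {m i : ℕ} (hi : i + 1 ≤ m) (G : GraphOn m) {b' : Fin (m + 2)}
    {w' : Fin (m - 1 + 2)}
    (h : conn (G.image fun e => (vmapFin m i e.1, vmapFin m i e.2)) (vmapFin m i b') w')
    (hnot : ¬ conn (G.image fun e => (vmapFin m i e.1, vmapFin m i e.2)) (vmapFin m i b')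
      (vmapFin m i ⟨i, by omega⟩))
    {u0 : Fin (m + 2)} (hu0 : vmapFin m i u0 = w') : conn G b' u0 := by
  obtain ⟨w, hw, hR⟩ := conn_pull hi G h
  have hvv : vmapFin m i (⟨i + 1, by omega⟩ : Fin (m + 2)) =
      vmapFin m i (⟨i, by omega⟩ : Fin (m + 2)) := by
    apply Fin.ext
    rw [vmap_val hi ⟨i + 1, by omega⟩, vmap_val hi ⟨i, by omega⟩]
    simp only [Fin.val_mk]
    split_ifs <;> omega
  have hconnw : conn G b' w := by
    rcases hR with h' | ⟨h1, _⟩ | ⟨h1, _⟩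
    · exact h'
    · exact absurd (conn_push (i := i) G h1) hnot
    · exact absurd (hvv ▸ conn_push (i := i) G h1) hnot
  have hww : vmapFin m i w = vmapFin m i u0 := by rw [hw, hu0]
  rcases vmap_eq_cases hi hww with rfl | ⟨hwm, _⟩
  · exact hconnw
  · exfalso
    apply hnot
    have hw'' : w' = vmapFin m i (⟨i, by omega⟩ : Fin (m + 2)) := by
      apply Fin.ext
      rw [← hw, vmap_val hi w, vmap_val hi ⟨i, by omega⟩]
      simp only [Fin.val_mk]
      rcases hwm with hwm | hwm <;> rw [hwm] <;> split_ifs <;> omega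
    exact hw'' ▸ h

/-- if `δ_iG` is an honest graph on `δ_iQ` and the `(i+1)`-th and `(i+2)`-th
pieces of `Q` (of 0-based indices `i` and `i+1`) are bases for the `G`-condensed map `f`,
then `f` is `δ_iG`-condensed. -/
theorem statement_9
    (n d : ℕ) (hn : 1 ≤ n) (hd : 1 ≤ d) (ρ ε : ℝ) (c : Fin (n + 2) → ℝ)
    (hρ0 : 0 < ρ) (hρ1 : ρ < 1) (hε0 : 0 < ε) (hc : ∀ i, 0 < c i)
    (hsum : ∑ i, c i = 1) (hc0 : 100 * ε / ρ < c 0)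
    (hci : ∀ i : Fin (n + 2), 1 ≤ (i : ℕ) →
      100 * (ε / ρ + ∑ j ∈ Finset.univ.filter (fun j : Fin (n + 2) => (j : ℕ) < (i : ℕ)), c j)
        < c i)
    (Q : IntervalPartition n) (G : GraphOn Q.p) (hG : IsGraphOn G)
    (X : Type) [TopologicalSpace X] (f : X → Vec n d)
    (hf : IsCondensed Q G f)
    (i : ℕ) (hi : i + 1 ≤ Q.p)
    (hδ : GoodPush Q (deltaPart Q i) G)
    (hbase₁ : IsBase Q G f ⟨i, by omega⟩)
    (hbase₂ : IsBase Q G f ⟨i + 1, by omega⟩) :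
    IsCondensed (deltaPart Q i) (pushGraph Q (deltaPart Q i) G) f := by
  classical
  have hPG : pushGraph Q (deltaPart Q i) G =
      G.image fun e => (vmapFin Q.p i e.1, vmapFin Q.p i e.2) := by
    unfold pushGraph
    apply Finset.image_congr
    intro e _
    simp only [pieceMap_delta]
    rfl
  set qa : Fin (Q.p + 2) := ⟨i, by omega⟩ with hqa
  set qb : Fin (Q.p + 2) := ⟨i + 1, by omega⟩ with hqb
  have hhull : ∀ (x : X) (a : Fin (Q.p + 2)),
      hullPoints Q f x a ⊆ hullPoints (deltaPart Q i) f x (vmapFin Q.p i a) := by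
    intro x a
    apply convexHull_mono
    rintro q ⟨j, hj, rfl⟩
    refine ⟨j, ?_, rfl⟩
    show vmapFin Q.p i (Q.toFun (elt n j)) = _
    rw [hj]
  have hvab : vmapFin Q.p i qb = vmapFin Q.p i qa := by
    apply Fin.ext
    rw [vmap_val hi qb, vmap_val hi qa]
    have h1 : (qa : ℕ) = i := rfl
    have h2 : (qb : ℕ) = i + 1 := rfl
    rw [h1, h2]
    split_ifs <;> omega
  have hval_qa : ((vmapFin Q.p i qa : Fin (Q.p - 1 + 2)) : ℕ) = i := by
    rw [vmap_val hi qa]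
    have h1 : (qa : ℕ) = i := rfl
    rw [h1]
    split_ifs <;> omega
  have hlt_reflect : ∀ x y : Fin (Q.p + 2),
      (vmapFin Q.p i x : ℕ) < (vmapFin Q.p i y : ℕ) → (x : ℕ) < (y : ℕ) := by
    intro x y hxy
    rw [vmap_val hi x, vmap_val hi y] at hxy
    split_ifs at hxy <;> omega
  have hlt_i : ∀ x : Fin (Q.p + 2),
      (vmapFin Q.p i x : ℕ) < i → (x : ℕ) < i := by
    intro x hx
    rw [vmap_val hi x] at hx
    split_ifs at hx <;> omega
  rw [hPG]
  refine ⟨hf.1, ?_⟩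
  intro a
  obtain ⟨u, hu⟩ := vmap_surj' (m := Q.p) (i := i) hi a
  by_cases hcase : conn (G.image fun e => (vmapFin Q.p i e.1, vmapFin Q.p i e.2))
      (vmapFin Q.p i qa) a
  · -- the merged vertex is a base of its component
    refine ⟨vmapFin Q.p i qa, conn_symm' _ hcase, ?_, ?_⟩
    · intro x b hconn j hj
      have hj' : vmapFin Q.p i (Q.toFun (elt n j)) = b := hj
      rcases merged_reach hi G hconn hj' with hc | hc
      · exact hhull x qa (hbase₁.1 x _ hc j rfl)
      · have := hhull x qb (hbase₂.1 x _ hc j rfl)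
        rwa [hvab] at this
    · intro e' he' hconn
      rintro ⟨hlt1, hlt2⟩
      obtain ⟨e, he, hee⟩ := Finset.mem_image.1 he'
      have he1 : vmapFin Q.p i e.1 = e'.1 := by rw [← hee]
      have he2 : vmapFin Q.p i e.2 = e'.2 := by rw [← hee]
      have hv1 : (e.1 : ℕ) < i := by
        apply hlt_i
        rw [he1]
        calc (e'.1 : ℕ) < (vmapFin Q.p i qa : ℕ) := hlt1
          _ = i := hval_qa
      have hv2 : (e.2 : ℕ) < i := by
        apply hlt_i
        rw [he2]
        calc (e'.2 : ℕ) < (vmapFin Q.p i qa : ℕ) := hlt2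
          _ = i := hval_qa
      rcases merged_reach hi G hconn he1 with hc | hc
      · exact hbase₁.2 e he hc ⟨hv1, by show (e.2 : ℕ) < i; exact hv2⟩
      · exact hbase₂.2 e he hc
          ⟨by show (e.1 : ℕ) < i + 1; omega, by show (e.2 : ℕ) < i + 1; omega⟩
  · -- the image of the old base is a base
    obtain ⟨b', hconnb', hbase'⟩ := hf.2 u
    have hconn_ab : conn (G.image fun e => (vmapFin Q.p i e.1, vmapFin Q.p i e.2))
        a (vmapFin Q.p i b') := by
      have := conn_push (i := i) G hconnb'
      rwa [hu] at this
    have hnot : ¬ conn (G.image fun e => (vmapFin Q.p i e.1, vmapFin Q.p i e.2))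
        (vmapFin Q.p i b') (vmapFin Q.p i qa) := by
      intro hcon
      exact hcase (conn_symm' _ (hconn_ab.trans hcon))
    refine ⟨vmapFin Q.p i b', hconn_ab, ?_, ?_⟩
    · intro x b hconn j hj
      have hj' : vmapFin Q.p i (Q.toFun (elt n j)) = b := hj
      have hc : conn G b' (Q.toFun (elt n j)) := plain_reach hi G hconn hnot hj'
      exact hhull x b' (hbase'.1 x _ hc j rfl)
    · intro e' he' hconn
      rintro ⟨hlt1, hlt2⟩
      obtain ⟨e, he, hee⟩ := Finset.mem_image.1 he'
      have he1 : vmapFin Q.p i e.1 = e'.1 := by rw [← hee]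
      have he2 : vmapFin Q.p i e.2 = e'.2 := by rw [← hee]
      have hc : conn G b' e.1 := plain_reach hi G hconn hnot he1
      have hv1 : (e.1 : ℕ) < (b' : ℕ) := by
        apply hlt_reflect
        rw [he1]
        exact hlt1
      have hv2 : (e.2 : ℕ) < (b' : ℕ) := by
        apply hlt_reflect
        rw [he2]
        exact hlt2
      exact hbase'.2 e he hc ⟨hv1, hv2⟩

end SinhaKnots
end
end
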